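/- Let X₁, X₂, …, X_N be i.i.d. Bernoulli(p) random variables, let S_n = (1/n) Σ_{i=1}^{n} X_i, and let P̄_N = (1/N) Σ_{n=1}^{N} S_n. Then Var(P̄_N) = (1/N²) Σ_{i=1}^{N} (Σ_{j=i}^{N} 1/j)² · p(1 − p), and this is at most ((H_N)²/N) · p(1 − p) ≤ ((1 + log N)²/N) · p(1 − p), where H_N = Σ_{j=1}^{N} 1/j is the N-th harmonic number. In particular Var(P̄_N) → 0 as N → ∞. -/

import Mathlib

/-!
Swapping the two sums writes `P̄_N = ∑ᵢ cᵢ Xᵢ` with `cᵢ = (1/N) ∑_{j=i}^N 1/j`. Independence makes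
the variance additive, so `Var P̄_N = ∑ᵢ cᵢ² p(1-p)`, and `0 ≤ cᵢ ≤ H_N / N` gives the bound
`H_N² / N · p(1-p)`. Finally `H_N ≤ 1 + log N` and `(1 + log x)² / x → 0`.
-/

open MeasureTheory ProbabilityTheory Filter

/-- The Bernoulli(p) distribution on `ℝ`: mass `p` at `1` and mass `1 - p` at `0`. -/
noncomputable def bernoulliMeasure (p : ℝ) : Measure ℝ :=
  ENNReal.ofReal p • Measure.dirac 1 + ENNReal.ofReal (1 - p) • Measure.dirac 0

open Finset unitInterval

theorem Finset.sum_Icc_sum_Icc_comm {α M : Type*} [Preorder α] [LocallyFiniteOrder α]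
    [AddCommMonoid M] (a b : α) (f : α → α → M) :
    ∑ n ∈ Icc a b, ∑ i ∈ Icc a n, f n i = ∑ i ∈ Icc a b, ∑ n ∈ Icc i b, f n i :=
  sum_comm' fun n i => by
    simp only [mem_Icc]
    exact ⟨fun ⟨⟨_, hnb⟩, hai, hin⟩ => ⟨⟨hin, hnb⟩, hai, hin.trans hnb⟩,
      fun ⟨⟨hin, hnb⟩, hai, _⟩ => ⟨⟨hai.trans hin, hnb⟩, hai, hin⟩⟩

theorem average_running_averages_eq {𝕜 : Type*} [Field 𝕜] (N : ℕ) (x : ℕ → 𝕜) :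
    1 / (N : 𝕜) * ∑ n ∈ Icc 1 N, 1 / (n : 𝕜) * ∑ i ∈ Icc 1 n, x i
      = ∑ i ∈ Icc 1 N, 1 / (N : 𝕜) * (∑ j ∈ Icc i N, 1 / (j : 𝕜)) * x i := by
  simp only [mul_sum, sum_Icc_sum_Icc_comm 1 N, sum_mul, mul_assoc]

theorem one_div_sq_mul_sum_sq_tail_harmonic_le (N : ℕ) :
    1 / (N : ℝ) ^ 2 * ∑ i ∈ Icc 1 N, (∑ j ∈ Icc i N, 1 / (j : ℝ)) ^ 2
      ≤ (∑ j ∈ Icc 1 N, 1 / (j : ℝ)) ^ 2 / N := by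
  set H := ∑ j ∈ Icc 1 N, 1 / (j : ℝ)
  have htail : ∀ i ∈ Icc 1 N, (∑ j ∈ Icc i N, 1 / (j : ℝ)) ^ 2 ≤ H ^ 2 := fun i hi =>
    pow_le_pow_left₀ (sum_nonneg fun _ _ => by positivity)
      (sum_le_sum_of_subset_of_nonneg (Icc_subset_Icc_left (mem_Icc.1 hi).1)
        fun _ _ _ => by positivity) 2
  calc 1 / (N : ℝ) ^ 2 * ∑ i ∈ Icc 1 N, (∑ j ∈ Icc i N, 1 / (j : ℝ)) ^ 2
      ≤ 1 / (N : ℝ) ^ 2 * (N * H ^ 2) := by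
        gcongr
        simpa using sum_le_card_nsmul (Icc 1 N) _ _ htail
    _ = H ^ 2 / N := by
      rcases N.eq_zero_or_pos with rfl | hN
      · simp
      · field_simp

theorem sum_Icc_one_div_le_one_add_log (N : ℕ) :
    ∑ j ∈ Icc 1 N, 1 / (j : ℝ) ≤ 1 + Real.log N := by
  simpa [harmonic_eq_sum_Icc] using harmonic_le_one_add_log N

theorem tendsto_one_add_log_sq_div_atTop :
    Tendsto (fun x : ℝ => (1 + Real.log x) ^ 2 / x) atTop (nhds 0) := by
  have hlog := Real.tendsto_pow_log_div_mul_add_atTop 1 0 1 one_ne_zero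
  have hlog_sq := Real.tendsto_pow_log_div_mul_add_atTop 1 0 2 one_ne_zero
  have hsum := tendsto_inv_atTop_zero.add ((hlog.const_mul 2).add hlog_sq)
  simp only [add_zero, mul_zero] at hsum
  exact hsum.congr fun x => by ring

namespace ProbabilityTheory

variable {Ω : Type*} {mΩ : MeasurableSpace Ω} {μ : Measure Ω}

theorem variance_id_bernoulliMeasure (x y : ℝ) (p : I) :
    Var[id; Ber(x, y, p)] = p * (1 - p) * (x - y) ^ 2 := by
  rw [variance_eq_integral measurable_id.aemeasurable, integral_bernoulliMeasure,
    integral_bernoulliMeasure]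
  simp only [id, smul_eq_mul]
  ring

theorem memLp_two_of_map_eq_bernoulliMeasure {X : Ω → ℝ} (hX : AEMeasurable X μ) {x y : ℝ}
    {p : I} (hdist : μ.map X = Ber(x, y, p)) : MemLp X 2 μ := by
  have hid : MemLp id 2 (μ.map X) := by
    rw [hdist, memLp_two_iff_integrable_sq aestronglyMeasurable_id]
    exact integrable_bernoulliMeasure _ _ _ _
  exact (memLp_map_measure_iff aestronglyMeasurable_id hX).1 hid

theorem variance_of_map_eq_bernoulliMeasure {X : Ω → ℝ} (hX : AEMeasurable X μ) {x y : ℝ}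
    {p : I} (hdist : μ.map X = Ber(x, y, p)) : Var[X; μ] = p * (1 - p) * (x - y) ^ 2 := by
  rw [← variance_id_map hX, hdist, variance_id_bernoulliMeasure]

theorem variance_fun_sum_const_mul {ι : Type*} {X : ι → Ω → ℝ} {s : Finset ι}
    (hX : ∀ i ∈ s, MemLp (X i) 2 μ) (hindep : Set.Pairwise ↑s fun i j => X i ⟂ᵢ[μ] X j)
    (c : ι → ℝ) :
    Var[fun ω => ∑ i ∈ s, c i * X i ω; μ] = ∑ i ∈ s, c i ^ 2 * Var[X i; μ] := by
  have h := IndepFun.variance_sum (s := s) (X := fun i => c i • X i)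
    (fun i hi => (hX i hi).const_smul (c i))
    (fun i hi j hj hij => (hindep hi hj hij).comp (measurable_const_mul (c i))
      (measurable_const_mul (c j)))
  have hfun : (fun ω => ∑ i ∈ s, c i * X i ω) = ∑ i ∈ s, c i • X i := by
    ext ω
    simp [Finset.sum_apply]
  simpa only [hfun, variance_smul] using h

end ProbabilityTheory

theorem bernoulliMeasure_eq_bernoulliMeasure_one_zero {p : ℝ} (hp : p ∈ I) :
    _root_.bernoulliMeasure p = Ber((1 : ℝ), 0, ⟨p, hp⟩) := by
  rw [_root_.bernoulliMeasure, bernoulliMeasure_def, ← Measure.coe_nnreal_smul,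
    ← Measure.coe_nnreal_smul]
  congr 3 <;> exact ENNReal.ofReal_eq_coe_nnreal _

theorem average_of_running_averages_variance_general {Ω : Type*} [MeasurableSpace Ω]
    (μ : Measure Ω)
    (p : ℝ) (hp0 : 0 ≤ p) (hp1 : p ≤ 1)
    (X : ℕ → Ω → ℝ)
    (hmeas : ∀ i, Measurable (X i))
    (hdist : ∀ i, Measure.map (X i) μ = _root_.bernoulliMeasure p)
    (hindep : iIndepFun X μ) :
    (∀ N : ℕ, 0 < N →
      variance (fun ω => (1 / (N : ℝ)) *
          ∑ n ∈ Finset.Icc 1 N, (1 / (n : ℝ)) * ∑ i ∈ Finset.Icc 1 n, X i ω) μ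
        = (1 / (N : ℝ) ^ 2) *
            ∑ i ∈ Finset.Icc 1 N, (∑ j ∈ Finset.Icc i N, 1 / (j : ℝ)) ^ 2 * (p * (1 - p)) ∧
      (1 / (N : ℝ) ^ 2) *
          ∑ i ∈ Finset.Icc 1 N, (∑ j ∈ Finset.Icc i N, 1 / (j : ℝ)) ^ 2 * (p * (1 - p))
        ≤ (∑ j ∈ Finset.Icc 1 N, 1 / (j : ℝ)) ^ 2 / N * (p * (1 - p)) ∧
      (∑ j ∈ Finset.Icc 1 N, 1 / (j : ℝ)) ^ 2 / N * (p * (1 - p))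
        ≤ (1 + Real.log N) ^ 2 / N * (p * (1 - p))) ∧
    Tendsto (fun N : ℕ =>
        variance (fun ω => (1 / (N : ℝ)) *
          ∑ n ∈ Finset.Icc 1 N, (1 / (n : ℝ)) * ∑ i ∈ Finset.Icc 1 n, X i ω) μ)
      atTop (nhds 0) := by
  have hp : p ∈ I := ⟨hp0, hp1⟩
  have hpq : 0 ≤ p * (1 - p) := mul_nonneg hp0 (by linarith)
  have hBer : ∀ i, μ.map (X i) = Ber((1 : ℝ), 0, ⟨p, hp⟩) := fun i =>
    (hdist i).trans (bernoulliMeasure_eq_bernoulliMeasure_one_zero hp)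
  have hvar : ∀ N : ℕ,
      variance (fun ω => (1 / (N : ℝ)) *
          ∑ n ∈ Icc 1 N, (1 / (n : ℝ)) * ∑ i ∈ Icc 1 n, X i ω) μ
        = (1 / (N : ℝ) ^ 2) *
            ∑ i ∈ Icc 1 N, (∑ j ∈ Icc i N, 1 / (j : ℝ)) ^ 2 * (p * (1 - p)) := by
    intro N
    simp only [average_running_averages_eq]
    rw [variance_fun_sum_const_mul
      (fun i _ => memLp_two_of_map_eq_bernoulliMeasure (hmeas i).aemeasurable (hBer i))
      (fun i _ j _ hij => hindep.indepFun hij), mul_sum]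
    refine sum_congr rfl fun i _ => ?_
    rw [variance_of_map_eq_bernoulliMeasure (hmeas i).aemeasurable (hBer i)]
    ring
  have hbound : ∀ N : ℕ,
      (1 / (N : ℝ) ^ 2) * ∑ i ∈ Icc 1 N, (∑ j ∈ Icc i N, 1 / (j : ℝ)) ^ 2 * (p * (1 - p))
        ≤ (∑ j ∈ Icc 1 N, 1 / (j : ℝ)) ^ 2 / N * (p * (1 - p)) := by
    intro N
    rw [← sum_mul, ← mul_assoc]
    exact mul_le_mul_of_nonneg_right (one_div_sq_mul_sum_sq_tail_harmonic_le N) hpq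
  have hlog : ∀ N : ℕ, (∑ j ∈ Icc 1 N, 1 / (j : ℝ)) ^ 2 / N * (p * (1 - p))
        ≤ (1 + Real.log N) ^ 2 / N * (p * (1 - p)) := fun N => by
    gcongr
    exact sum_Icc_one_div_le_one_add_log N
  refine ⟨fun N _ => ⟨hvar N, hbound N, hlog N⟩, ?_⟩
  have hlim : Tendsto (fun N : ℕ => (1 + Real.log N) ^ 2 / N * (p * (1 - p))) atTop (nhds 0) := by
    simpa using (tendsto_one_add_log_sq_div_atTop.comp tendsto_natCast_atTop_atTop).mul_const
      (p * (1 - p))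
  exact squeeze_zero (fun N => variance_nonneg _ μ)
    (fun N => (hvar N).trans_le ((hbound N).trans (hlog N))) hlim

/-- **Variance bound for the NFR estimator (Lemma 2, variance part).**
Let `X 1, X 2, …` be i.i.d. Bernoulli(p), `S n = (1/n) ∑_{i=1}^n X i`, and
`P̄_N = (1/N) ∑_{n=1}^N S n`.  Then
`Var(P̄_N) = (1/N²) ∑_{i=1}^N (∑_{j=i}^N 1/j)² p(1-p)`, which is at most
`(H_N)²/N · p(1-p) ≤ (1 + log N)²/N · p(1-p)` where `H_N` is the `N`-th harmonic
number; in particular `Var(P̄_N) → 0` as `N → ∞`. -/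
theorem average_of_running_averages_variance {Ω : Type*} [MeasurableSpace Ω]
    (μ : Measure Ω) [IsProbabilityMeasure μ]
    (p : ℝ) (hp0 : 0 ≤ p) (hp1 : p ≤ 1)
    (X : ℕ → Ω → ℝ)
    (hmeas : ∀ i, Measurable (X i))
    (hdist : ∀ i, Measure.map (X i) μ = _root_.bernoulliMeasure p)
    (hindep : iIndepFun X μ) :
    (∀ N : ℕ, 0 < N →
      variance (fun ω => (1 / (N : ℝ)) *
          ∑ n ∈ Finset.Icc 1 N, (1 / (n : ℝ)) * ∑ i ∈ Finset.Icc 1 n, X i ω) μ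
        = (1 / (N : ℝ) ^ 2) *
            ∑ i ∈ Finset.Icc 1 N, (∑ j ∈ Finset.Icc i N, 1 / (j : ℝ)) ^ 2 * (p * (1 - p)) ∧
      (1 / (N : ℝ) ^ 2) *
          ∑ i ∈ Finset.Icc 1 N, (∑ j ∈ Finset.Icc i N, 1 / (j : ℝ)) ^ 2 * (p * (1 - p))
        ≤ (∑ j ∈ Finset.Icc 1 N, 1 / (j : ℝ)) ^ 2 / N * (p * (1 - p)) ∧
      (∑ j ∈ Finset.Icc 1 N, 1 / (j : ℝ)) ^ 2 / N * (p * (1 - p))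
        ≤ (1 + Real.log N) ^ 2 / N * (p * (1 - p))) ∧
    Tendsto (fun N : ℕ =>
        variance (fun ω => (1 / (N : ℝ)) *
          ∑ n ∈ Finset.Icc 1 N, (1 / (n : ℝ)) * ∑ i ∈ Finset.Icc 1 n, X i ω) μ)
      atTop (nhds 0) :=
  average_of_running_averages_variance_general μ p hp0 hp1 X hmeas hdist hindep
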